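/- arXiv:2507.05398 — 3 statements merged into one kernel-verified Lean document; each statement's English description precedes it below -/
import Mathlib

section
/- For every a, b, e in a complex Hilbert space H with a positive bounded operator A and ‖e‖_A = 1, and every α ∈ [0,1], one has |⟨a,e⟩_A ⟨e,b⟩_A| ≤ ((1+α)/2) ‖a‖_A ‖b‖_A + ((1−α)/2) |⟨a,b⟩_A|. -/
/-!
Factor `A = T† T`, so that `⟪x, y⟫_A = ⟪T x, T y⟫` and the claim becomes one about the unit
vector `f = T e` of `H`. The components of `x` and `y` orthogonal to `f` have inner product
`⟪x, y⟫ - ⟪x, f⟫⟪f, y⟫`, and Cauchy–Schwarz applied to them and then in `ℝ²` gives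
`|⟪x, y⟫ - ⟪x, f⟫⟪f, y⟫| + |⟪x, f⟫⟪f, y⟫| ≤ ‖x‖ ‖y‖`. The triangle inequality turns this into
Buzano's inequality `|⟪x, f⟫⟪f, y⟫| ≤ (‖x‖ ‖y‖ + |⟪x, y⟫|) / 2`, and the general `α` adds
`α / 2` times the Cauchy–Schwarz gap `‖x‖ ‖y‖ - |⟪x, y⟫| ≥ 0`.
-/

open scoped InnerProductSpace

variable {H : Type*} [NormedAddCommGroup H] [InnerProductSpace ℂ H] [CompleteSpace H]

/-- The `A`-semi-inner product `⟪x, y⟫_A = ⟪A x, y⟫`. -/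
noncomputable def ipA (A : H →L[ℂ] H) (x y : H) : ℂ := ⟪A x, y⟫_ℂ

/-- The `A`-semi-norm `‖x‖_A = √(re ⟪A x, x⟫)`. -/
noncomputable def nA (A : H →L[ℂ] H) (x : H) : ℝ := Real.sqrt (ipA A x x).re

section UnitVector

variable {𝕜 E : Type*} [RCLike 𝕜] [NormedAddCommGroup E] [InnerProductSpace 𝕜 E]
  {f : E} (hf : ‖f‖ = 1)
include hf

lemma inner_sub_inner_smul_of_norm_eq_one (x y : E) :
    ⟪x - ⟪f, x⟫_𝕜 • f, y - ⟪f, y⟫_𝕜 • f⟫_𝕜 = ⟪x, y⟫_𝕜 - ⟪x, f⟫_𝕜 * ⟪f, y⟫_𝕜 := by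
  simp only [inner_sub_left, inner_sub_right, inner_smul_left, inner_smul_right,
    inner_conj_symm, inner_self_eq_one_of_norm_eq_one hf]
  ring

lemma norm_sub_inner_smul_sq_of_norm_eq_one (x : E) :
    ‖x - ⟪f, x⟫_𝕜 • f‖ ^ 2 = ‖x‖ ^ 2 - ‖⟪f, x⟫_𝕜‖ ^ 2 := by
  have h := congrArg RCLike.re (inner_sub_inner_smul_of_norm_eq_one (𝕜 := 𝕜) hf x x)
  rwa [map_sub, inner_mul_symm_re_eq_norm, norm_mul, norm_inner_symm x f, ← sq,
    inner_self_eq_norm_sq, inner_self_eq_norm_sq] at h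

theorem norm_inner_sub_add_norm_inner_mul_le (x y : E) :
    ‖⟪x, y⟫_𝕜 - ⟪x, f⟫_𝕜 * ⟪f, y⟫_𝕜‖ + ‖⟪x, f⟫_𝕜 * ⟪f, y⟫_𝕜‖ ≤ ‖x‖ * ‖y‖ := by
  set s := ‖x - ⟪f, x⟫_𝕜 • f‖
  set t := ‖y - ⟪f, y⟫_𝕜 • f‖
  set p := ‖⟪f, x⟫_𝕜‖
  set q := ‖⟪f, y⟫_𝕜‖
  have hx : ‖x‖ ^ 2 = s ^ 2 + p ^ 2 := by
    rw [norm_sub_inner_smul_sq_of_norm_eq_one hf]; ring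
  have hy : ‖y‖ ^ 2 = t ^ 2 + q ^ 2 := by
    rw [norm_sub_inner_smul_sq_of_norm_eq_one hf]; ring
  have hst : ‖⟪x, y⟫_𝕜 - ⟪x, f⟫_𝕜 * ⟪f, y⟫_𝕜‖ ≤ s * t := by
    rw [← inner_sub_inner_smul_of_norm_eq_one hf]
    exact norm_inner_le_norm _ _
  have hpq : ‖⟪x, f⟫_𝕜 * ⟪f, y⟫_𝕜‖ = p * q := by rw [norm_mul, norm_inner_symm]
  -- Cauchy–Schwarz in `ℝ²` for `(s, p)` and `(t, q)`.
  have hCS : s * t + p * q ≤ ‖x‖ * ‖y‖ := by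
    refine le_of_sq_le_sq ?_ (by positivity)
    rw [mul_pow, hx, hy]
    nlinarith [sq_nonneg (s * q - p * t)]
  linarith

theorem norm_inner_mul_inner_le_of_norm_eq_one (x y : E) :
    ‖⟪x, f⟫_𝕜 * ⟪f, y⟫_𝕜‖ ≤ (‖x‖ * ‖y‖ + ‖⟪x, y⟫_𝕜‖) / 2 := by
  have := norm_inner_sub_add_norm_inner_mul_le (𝕜 := 𝕜) hf x y
  have := norm_sub_norm_le (⟪x, f⟫_𝕜 * ⟪f, y⟫_𝕜) ⟪x, y⟫_𝕜
  rw [norm_sub_rev] at this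
  linarith

theorem norm_inner_mul_inner_le_of_norm_eq_one_of_nonneg (x y : E) {α : ℝ} (hα : 0 ≤ α) :
    ‖⟪x, f⟫_𝕜 * ⟪f, y⟫_𝕜‖ ≤ (1 + α) / 2 * (‖x‖ * ‖y‖) + (1 - α) / 2 * ‖⟪x, y⟫_𝕜‖ := by
  have := norm_inner_mul_inner_le_of_norm_eq_one (𝕜 := 𝕜) hf x y
  nlinarith [norm_inner_le_norm (𝕜 := 𝕜) x y]

end UnitVector

theorem ContinuousLinearMap.IsPositive.exists_ipA_eq_inner {A : H →L[ℂ] H} (hA : A.IsPositive) :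
    ∃ T : H →L[ℂ] H, ∀ x y, ipA A x y = ⟪T x, T y⟫_ℂ := by
  obtain ⟨T, rfl⟩ := CStarAlgebra.nonneg_iff_eq_star_mul_self.mp (A.nonneg_iff_isPositive.mpr hA)
  refine ⟨T, fun x y => ?_⟩
  rw [ipA, ContinuousLinearMap.star_eq_adjoint, mul_apply_eq_comp,
    ContinuousLinearMap.adjoint_inner_left]

theorem nA_eq_norm {E : Type*} [NormedAddCommGroup E] [InnerProductSpace ℂ E]
    {A T : E →L[ℂ] E} (hT : ∀ x y, ipA A x y = ⟪T x, T y⟫_ℂ) (x : E) : nA A x = ‖T x‖ := by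
  rw [nA, hT, norm_eq_sqrt_re_inner (𝕜 := ℂ)]
  rfl

theorem stmt1 (A : H →L[ℂ] H) (hA : A.IsPositive) (a b e : H) (he : nA A e = 1)
    (α : ℝ) (hα : α ∈ Set.Icc (0 : ℝ) 1) :
    ‖ipA A a e * ipA A e b‖ ≤
      ((1 + α) / 2) * (nA A a * nA A b) + ((1 - α) / 2) * ‖ipA A a b‖ := by
  obtain ⟨T, hT⟩ := hA.exists_ipA_eq_inner
  simp only [hT, nA_eq_norm hT] at he ⊢
  exact norm_inner_mul_inner_le_of_norm_eq_one_of_nonneg he (T a) (T b) hα.1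
end

section
/- For every a, b, e in a complex Hilbert space H with a positive bounded operator A and ‖e‖_A = 1, every α ∈ [0,1] and every real r ≥ 1, one has |⟨a,e⟩_A ⟨e,b⟩_A|^r ≤ ((1+α)/2) ‖a‖_A^r ‖b‖_A^r + ((1−α)/2) |⟨a,b⟩_A|^r. -/
open scoped InnerProductSpace

variable {H : Type*} [NormedAddCommGroup H] [InnerProductSpace ℂ H] [CompleteSpace H]

/-!
Writing `A = S * S` with `S = √A` turns `⟪x, y⟫_A` into the genuine inner product `⟪S x, S y⟫`,
so it suffices to work in an inner product space. There Buzano's inequality follows by reflecting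
`b` in the line through the unit vector `e`: the reflection `b' = 2⟪e, b⟫ e - b` has `‖b'‖ = ‖b‖`
and `2⟪a, e⟫⟪e, b⟫ = ⟪a, b'⟫ + ⟪a, b⟫`. Averaging Buzano with Cauchy–Schwarz gives the
`α`-weighted form, and convexity of `t ↦ t ^ r` on `[0, ∞)` raises it to the power `r`.
-/

section InnerProductSpace

variable {𝕜 E : Type*} [RCLike 𝕜] [NormedAddCommGroup E] [InnerProductSpace 𝕜 E]

theorem norm_inner_mul_inner_le_buzano {a b e : E} (he : ‖e‖ = 1) :
    ‖⟪a, e⟫_𝕜 * ⟪e, b⟫_𝕜‖ ≤ (‖a‖ * ‖b‖ + ‖⟪a, b⟫_𝕜‖) / 2 := by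
  set b' := (𝕜 ∙ e).reflection b
  have hb' : b' = (2 * ⟪e, b⟫_𝕜) • e - b := by
    simp only [b', Submodule.reflection_apply, Submodule.starProjection_unit_singleton 𝕜 he,
      ← Nat.cast_smul_eq_nsmul 𝕜, smul_smul, Nat.cast_ofNat]
  have hsum : 2 * (⟪a, e⟫_𝕜 * ⟪e, b⟫_𝕜) = ⟪a, b'⟫_𝕜 + ⟪a, b⟫_𝕜 := by
    rw [hb', inner_sub_right, inner_smul_right]; ring
  have htwice : 2 * ‖⟪a, e⟫_𝕜 * ⟪e, b⟫_𝕜‖ ≤ ‖a‖ * ‖b‖ + ‖⟪a, b⟫_𝕜‖ := calc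
    2 * ‖⟪a, e⟫_𝕜 * ⟪e, b⟫_𝕜‖ = ‖⟪a, b'⟫_𝕜 + ⟪a, b⟫_𝕜‖ := by
      rw [← hsum, norm_mul (2 : 𝕜), RCLike.norm_ofNat]
    _ ≤ ‖⟪a, b'⟫_𝕜‖ + ‖⟪a, b⟫_𝕜‖ := norm_add_le _ _
    _ ≤ ‖a‖ * ‖b‖ + ‖⟪a, b⟫_𝕜‖ := by
      gcongr
      simpa [b'] using norm_inner_le_norm (𝕜 := 𝕜) a b'
  linarith

theorem norm_inner_mul_inner_le_of_norm_eq_one_s2 {a b e : E} (he : ‖e‖ = 1) :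
    ‖⟪a, e⟫_𝕜 * ⟪e, b⟫_𝕜‖ ≤ ‖a‖ * ‖b‖ := calc
  ‖⟪a, e⟫_𝕜 * ⟪e, b⟫_𝕜‖ ≤ (‖a‖ * ‖e‖) * (‖e‖ * ‖b‖) := by
    rw [norm_mul]; gcongr <;> exact norm_inner_le_norm _ _
  _ = ‖a‖ * ‖b‖ := by rw [he]; ring

theorem norm_inner_mul_inner_le_weighted_buzano {a b e : E} (he : ‖e‖ = 1) {α : ℝ}
    (hα₀ : 0 ≤ α) (hα₁ : α ≤ 1) :
    ‖⟪a, e⟫_𝕜 * ⟪e, b⟫_𝕜‖ ≤ (1 + α) / 2 * (‖a‖ * ‖b‖) + (1 - α) / 2 * ‖⟪a, b⟫_𝕜‖ := by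
  have hBuzano := norm_inner_mul_inner_le_buzano (𝕜 := 𝕜) (a := a) (b := b) he
  have hCauchySchwarz := norm_inner_mul_inner_le_of_norm_eq_one_s2 (𝕜 := 𝕜) (a := a) (b := b) he
  nlinarith

end InnerProductSpace

theorem rpow_le_convex_comb_of_le {x u v s t r : ℝ} (hx : 0 ≤ x) (hu : 0 ≤ u) (hv : 0 ≤ v)
    (hs : 0 ≤ s) (ht : 0 ≤ t) (hst : s + t = 1) (hr : 1 ≤ r) (h : x ≤ s * u + t * v) :
    x ^ r ≤ s * u ^ r + t * v ^ r := calc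
  x ^ r ≤ (s * u + t * v) ^ r := by gcongr
  _ ≤ s * u ^ r + t * v ^ r := (convexOn_rpow hr).2 hu hv hs ht hst

namespace ContinuousLinearMap.IsPositive

variable {A : H →L[ℂ] H} (hA : A.IsPositive)
include hA

theorem ipA_eq_inner_sqrt (x y : H) : ipA A x y = ⟪CFC.sqrt A x, CFC.sqrt A y⟫_ℂ := by
  have hsa : IsSelfAdjoint (CFC.sqrt A) := IsSelfAdjoint.of_nonneg (CFC.sqrt_nonneg A)
  conv_lhs => rw [ipA, ← CFC.sqrt_mul_sqrt_self A ((nonneg_iff_isPositive A).2 hA)]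
  exact hsa.isSymmetric _ _

theorem nA_eq_norm_sqrt (x : H) : nA A x = ‖CFC.sqrt A x‖ := by
  rw [nA, hA.ipA_eq_inner_sqrt, ← RCLike.re_to_complex, inner_self_eq_norm_sq,
    Real.sqrt_sq (norm_nonneg _)]

end ContinuousLinearMap.IsPositive

theorem stmt2 (A : H →L[ℂ] H) (hA : A.IsPositive) (a b e : H) (he : nA A e = 1)
    (α : ℝ) (hα : α ∈ Set.Icc (0 : ℝ) 1) (r : ℝ) (hr : 1 ≤ r) :
    ‖ipA A a e * ipA A e b‖ ^ r ≤
      ((1 + α) / 2) * (nA A a ^ r * nA A b ^ r) +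
        ((1 - α) / 2) * ‖ipA A a b‖ ^ r := by
  simp only [hA.ipA_eq_inner_sqrt, hA.nA_eq_norm_sqrt] at he ⊢
  rw [← Real.mul_rpow (norm_nonneg _) (norm_nonneg _)]
  obtain ⟨hα₀, hα₁⟩ := hα
  exact rpow_le_convex_comb_of_le (norm_nonneg _) (by positivity) (norm_nonneg _)
    (by linarith) (by linarith) (by ring) hr
    (norm_inner_mul_inner_le_weighted_buzano he hα₀ hα₁)
end

section
/- Let H be a complex Hilbert space with positive bounded operator A. For all a, b, e ∈ H with ‖e‖_A = 1 and every α ∈ [0,1], one has ( |⟨a,e⟩_A| + |⟨e,b⟩_A| )² ≤ √( ‖a‖_A⁴ + ‖b‖_A⁴ + 2|⟨a,b⟩_A|² ) + (1+α) ‖a‖_A ‖b‖_A + (1−α) |⟨a,b⟩_A|. -/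
/-!
With `p = |⟪a, e⟫|`, `q = |⟪b, e⟫|` and `u = ⟪a, e⟫ a + ⟪b, e⟫ b` one has `⟪u, e⟫ = p² + q²`, so
Cauchy–Schwarz gives `(p² + q²)² ≤ ‖u‖²`. Expanding `‖u‖²` and applying Cauchy–Schwarz in `ℝ³`
to `(p², q², √2 pq)` and `(‖a‖², ‖b‖², √2 |⟪a, b⟫|)` bounds it by
`(p² + q²) √(‖a‖⁴ + ‖b‖⁴ + 2|⟪a, b⟫|²)`.
The cross term `2pq` of `(p + q)²` is handled by Buzano's inequality
`2pq ≤ ‖a‖ ‖b‖ + |⟪a, b⟫|`, which follows from Cauchy–Schwarz for `a` and the reflection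
`2⟪e, b⟫ e - b` of `b`, averaged with weights `1 - α`, `α` against `pq ≤ ‖a‖ ‖b‖`.
All of this holds in any semi-inner product space, and `⟪x, y⟫_A` turns `H` into one.
-/

open scoped InnerProductSpace

variable {H : Type*} [NormedAddCommGroup H] [InnerProductSpace ℂ H] [CompleteSpace H]

open RCLike

theorem sq_mul_add_sq_mul_add_two_mul_le (p q x y z : ℝ) :
    p ^ 2 * x + q ^ 2 * y + 2 * (p * q * z) ≤ (p ^ 2 + q ^ 2) * √(x ^ 2 + y ^ 2 + 2 * z ^ 2) := by
  -- Lagrange's identity for the vectors `(p², q², √2 pq)` and `(x, y, √2 z)`.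
  have hlagrange : (p ^ 2 * x + q ^ 2 * y + 2 * (p * q * z)) ^ 2 ≤
      (p ^ 2 + q ^ 2) ^ 2 * (x ^ 2 + y ^ 2 + 2 * z ^ 2) := by
    nlinarith [sq_nonneg (p ^ 2 * y - q ^ 2 * x), sq_nonneg (p ^ 2 * z - p * q * x),
      sq_nonneg (q ^ 2 * z - p * q * y)]
  calc p ^ 2 * x + q ^ 2 * y + 2 * (p * q * z)
      ≤ √((p ^ 2 + q ^ 2) ^ 2 * (x ^ 2 + y ^ 2 + 2 * z ^ 2)) :=
        (le_abs_self _).trans (Real.abs_le_sqrt hlagrange)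
    _ = (p ^ 2 + q ^ 2) * √(x ^ 2 + y ^ 2 + 2 * z ^ 2) := by
        rw [Real.sqrt_mul (by positivity), Real.sqrt_sq (by positivity)]

section SemiInnerProductSpace

variable {𝕜 E : Type*} [RCLike 𝕜] [SeminormedAddCommGroup E] [InnerProductSpace 𝕜 E]

theorem norm_two_inner_smul_sub {e : E} (he : ‖e‖ = 1) (b : E) :
    ‖(2 * ⟪e, b⟫_𝕜) • e - b‖ = ‖b‖ := by
  have hinner : ⟪(2 * ⟪e, b⟫_𝕜) • e, b⟫_𝕜 = ((2 * ‖⟪e, b⟫_𝕜‖ ^ 2 : ℝ) : 𝕜) := by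
    rw [inner_smul_left, map_mul, map_ofNat, mul_assoc, RCLike.conj_mul]
    push_cast
    ring
  have hsq : ‖(2 * ⟪e, b⟫_𝕜) • e - b‖ ^ 2 = ‖b‖ ^ 2 := by
    rw [norm_sub_sq (𝕜 := 𝕜), hinner, ofReal_re, norm_smul, he, norm_mul, norm_ofNat]
    ring
  exact (sq_eq_sq₀ (norm_nonneg _) (norm_nonneg _)).1 hsq

theorem two_mul_norm_inner_mul_norm_inner_le {e : E} (he : ‖e‖ = 1) (a b : E) :
    2 * (‖⟪a, e⟫_𝕜‖ * ‖⟪e, b⟫_𝕜‖) ≤ ‖a‖ * ‖b‖ + ‖⟪a, b⟫_𝕜‖ := by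
  set b' := (2 * ⟪e, b⟫_𝕜) • e - b
  have hab' : 2 * ⟪e, b⟫_𝕜 * ⟪a, e⟫_𝕜 = ⟪a, b'⟫_𝕜 + ⟪a, b⟫_𝕜 := by
    simp only [b', inner_sub_right, inner_smul_right]
    ring
  calc 2 * (‖⟪a, e⟫_𝕜‖ * ‖⟪e, b⟫_𝕜‖) = ‖⟪a, b'⟫_𝕜 + ⟪a, b⟫_𝕜‖ := by
        rw [← hab', norm_mul, norm_mul, norm_ofNat]
        ring
    _ ≤ ‖a‖ * ‖b'‖ + ‖⟪a, b⟫_𝕜‖ := (norm_add_le _ _).trans (by gcongr; exact norm_inner_le_norm _ _)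
    _ = ‖a‖ * ‖b‖ + ‖⟪a, b⟫_𝕜‖ := by rw [norm_two_inner_smul_sub he]

theorem two_mul_norm_inner_mul_norm_inner_le_of_mem_Icc {e : E} (he : ‖e‖ = 1) (a b : E)
    {α : ℝ} (hα : α ∈ Set.Icc (0 : ℝ) 1) :
    2 * (‖⟪a, e⟫_𝕜‖ * ‖⟪e, b⟫_𝕜‖) ≤ (1 + α) * (‖a‖ * ‖b‖) + (1 - α) * ‖⟪a, b⟫_𝕜‖ := by
  have hbuzano := two_mul_norm_inner_mul_norm_inner_le (𝕜 := 𝕜) he a b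
  have hcs : ‖⟪a, e⟫_𝕜‖ * ‖⟪e, b⟫_𝕜‖ ≤ ‖a‖ * ‖b‖ := by
    have := mul_le_mul (norm_inner_le_norm (𝕜 := 𝕜) a e) (norm_inner_le_norm (𝕜 := 𝕜) e b)
      (norm_nonneg _) (by positivity)
    rwa [he, mul_one, one_mul] at this
  linarith [mul_nonneg hα.1 (sub_nonneg.2 hcs),
    mul_nonneg (sub_nonneg.2 hα.2) (sub_nonneg.2 hbuzano)]

theorem norm_smul_add_smul_sq_le (l m : 𝕜) (a b : E) :
    ‖l • a + m • b‖ ^ 2 ≤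
      ‖l‖ ^ 2 * ‖a‖ ^ 2 + ‖m‖ ^ 2 * ‖b‖ ^ 2 + 2 * (‖l‖ * ‖m‖ * ‖⟪a, b⟫_𝕜‖) := by
  have hcross : re ⟪l • a, m • b⟫_𝕜 ≤ ‖l‖ * ‖m‖ * ‖⟪a, b⟫_𝕜‖ := by
    rw [inner_smul_left, inner_smul_right]
    refine (re_le_norm _).trans_eq ?_
    simp only [norm_mul, RCLike.norm_conj]
    ring
  rw [norm_add_sq (𝕜 := 𝕜), norm_smul, norm_smul, mul_pow, mul_pow]
  linarith

theorem sq_norm_inner_add_sq_norm_inner_le {e : E} (he : ‖e‖ = 1) (a b : E) :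
    ‖⟪a, e⟫_𝕜‖ ^ 2 + ‖⟪b, e⟫_𝕜‖ ^ 2 ≤ √(‖a‖ ^ 4 + ‖b‖ ^ 4 + 2 * ‖⟪a, b⟫_𝕜‖ ^ 2) := by
  set s := ‖⟪a, e⟫_𝕜‖ ^ 2 + ‖⟪b, e⟫_𝕜‖ ^ 2
  set u := ⟪a, e⟫_𝕜 • a + ⟪b, e⟫_𝕜 • b
  have hue : ⟪u, e⟫_𝕜 = (s : 𝕜) := by
    simp only [u, s, inner_add_left, inner_smul_left, RCLike.conj_mul]
    push_cast
    rfl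
  have hs_le : s ≤ ‖u‖ := by
    have := norm_inner_le_norm (𝕜 := 𝕜) u e
    rwa [hue, he, mul_one, norm_ofReal, abs_of_nonneg (by positivity)] at this
  have hu_sq : ‖u‖ ^ 2 ≤ s * √(‖a‖ ^ 4 + ‖b‖ ^ 4 + 2 * ‖⟪a, b⟫_𝕜‖ ^ 2) := by
    have h := sq_mul_add_sq_mul_add_two_mul_le ‖⟪a, e⟫_𝕜‖ ‖⟪b, e⟫_𝕜‖ (‖a‖ ^ 2) (‖b‖ ^ 2)
      ‖⟪a, b⟫_𝕜‖
    rw [← pow_mul, ← pow_mul] at h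
    exact (norm_smul_add_smul_sq_le _ _ a b).trans h
  rcases (show 0 ≤ s by positivity).eq_or_lt with hs | hs
  · rw [← hs]
    positivity
  · refine le_of_mul_le_mul_left ?_ hs
    calc s * s = s ^ 2 := (sq s).symm
      _ ≤ ‖u‖ ^ 2 := pow_le_pow_left₀ hs.le hs_le 2
      _ ≤ s * √(‖a‖ ^ 4 + ‖b‖ ^ 4 + 2 * ‖⟪a, b⟫_𝕜‖ ^ 2) := hu_sq

theorem sq_norm_inner_add_norm_inner_le {e : E} (he : ‖e‖ = 1) (a b : E) {α : ℝ}
    (hα : α ∈ Set.Icc (0 : ℝ) 1) :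
    (‖⟪a, e⟫_𝕜‖ + ‖⟪e, b⟫_𝕜‖) ^ 2 ≤
      √(‖a‖ ^ 4 + ‖b‖ ^ 4 + 2 * ‖⟪a, b⟫_𝕜‖ ^ 2) + (1 + α) * (‖a‖ * ‖b‖) +
        (1 - α) * ‖⟪a, b⟫_𝕜‖ := by
  have hsq := sq_norm_inner_add_sq_norm_inner_le (𝕜 := 𝕜) he a b
  have hcross := two_mul_norm_inner_mul_norm_inner_le_of_mem_Icc (𝕜 := 𝕜) he a b hα
  rw [norm_inner_symm b e] at hsq
  linarith [add_sq ‖⟪a, e⟫_𝕜‖ ‖⟪e, b⟫_𝕜‖]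

end SemiInnerProductSpace

section ipA

variable {E : Type*} [NormedAddCommGroup E] [InnerProductSpace ℂ E] (A : E →L[ℂ] E)

theorem ipA_add_left (x y z : E) : ipA A (x + y) z = ipA A x z + ipA A y z := by
  rw [ipA, map_add, inner_add_left, ipA, ipA]

theorem ipA_smul_left (r : ℂ) (x y : E) : ipA A (r • x) y = starRingEnd ℂ r * ipA A x y := by
  rw [ipA, map_smul, inner_smul_left, ipA]

theorem ContinuousLinearMap.IsPositive.conj_ipA {A : E →L[ℂ] E} (hA : A.IsPositive) (x y : E) :
    starRingEnd ℂ (ipA A x y) = ipA A y x := by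
  rw [ipA, inner_conj_symm, ← hA.inner_left_eq_inner_right, ipA]

end ipA

namespace ContinuousLinearMap

variable {E : Type*} [NormedAddCommGroup E] [InnerProductSpace ℂ E]

/-- `E` again, so that `⟪x, y⟫_A` can serve as its inner product without clashing with the
instances of `E`. -/
def WithSemiInner (_A : E →L[ℂ] E) : Type _ := E

variable {A : E →L[ℂ] E}

instance : AddCommGroup A.WithSemiInner := inferInstanceAs (AddCommGroup E)

instance : Module ℂ A.WithSemiInner := inferInstanceAs (Module ℂ E)

noncomputable abbrev IsPositive.semiInnerCore (hA : A.IsPositive) :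
    PreInnerProductSpace.Core ℂ A.WithSemiInner where
  inner x y := ipA A x y
  conj_inner_symm x y := hA.conj_ipA y x
  re_inner_nonneg := hA.re_inner_nonneg_left
  add_left := ipA_add_left A
  smul_left x y r := ipA_smul_left A r x y

end ContinuousLinearMap

theorem stmt8 (A : H →L[ℂ] H) (hA : A.IsPositive) (a b e : H) (he : nA A e = 1)
    (α : ℝ) (hα : α ∈ Set.Icc (0 : ℝ) 1) :
    (‖ipA A a e‖ + ‖ipA A e b‖) ^ 2 ≤
      Real.sqrt (nA A a ^ 4 + nA A b ^ 4 + 2 * ‖ipA A a b‖ ^ 2) +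
        (1 + α) * (nA A a * nA A b) + (1 - α) * ‖ipA A a b‖ := by
  let : SeminormedAddCommGroup A.WithSemiInner :=
    InnerProductSpace.Core.toSeminormedAddCommGroup (c := hA.semiInnerCore)
  let : InnerProductSpace ℂ A.WithSemiInner := InnerProductSpace.ofCore hA.semiInnerCore
  exact sq_norm_inner_add_norm_inner_le (E := A.WithSemiInner) he a b hα
end
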